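/- Fix k ≥ 1 and R > 0. For n ≥ k+1 let D = 2k(n−k), vol G_{k,n} = ∏_{i=n−k+1}^{n} (2π^i/(i−1)!) / ∏_{j=1}^{k} (2π^j/(j−1)!), |B^D| = π^{D/2}/Γ(D/2+1), and define the Gilbert–Varshamov radius r̲₀(n) = (2^{−nR} · vol G_{k,n}/|B^D|)^{1/D}. Then (i) r̲₀(n) ≥ (1/2)^{nR/D} for every n ≥ k+1, with this lower bound monotonically increasing in n, and (ii) lim_{n→∞} r̲₀(n) = √(k · 2^{−R/k}) = √(k/2^{R/k}). -/

import Mathlib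

/-!
Put `n = m + k`. Then `vol G_{k,n} / |B^{2km}| = X_m := (km)! ∏_{i<k} i! / (m+i)!`, with `X_0 = 1`
and `X_{m+1} / X_m = ∏_{i<k} (km+i+1) / (m+i+1)`. Every factor is at least `1` and tends to `k`,
so `X_m ≥ 1`, which gives the lower bound, and by Cesàro `log X_m / m → k log k`. Hence
`r̲₀(m+k) = (2^{-(m+k)R} X_m)^{1/(2km)} → 2^{-R/(2k)} √k`.
-/

open Real Finset Filter

/-- Total volume of the complex Grassmann manifold `G_{k,n}`. -/
noncomputable def grassmannVol (k n : ℕ) : ℝ :=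
  (∏ i ∈ Finset.Icc (n - k + 1) n, 2 * π ^ (i : ℕ) / (Nat.factorial (i - 1) : ℝ)) /
    ∏ j ∈ Finset.Icc 1 k, 2 * π ^ (j : ℕ) / (Nat.factorial (j - 1) : ℝ)

/-- Volume of the unit ball in `ℝ^m`. -/
noncomputable def unitBallVol (m : ℕ) : ℝ :=
  π ^ ((m : ℝ) / 2) / Real.Gamma ((m : ℝ) / 2 + 1)

/-- The Gilbert–Varshamov radius for packings of cardinality `2^{nR}` in `G_{k,n}`,
obtained from the flat comparison volume `|B^D| r^D = vol G_{k,n} / 2^{nR}`,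
`D = 2k(n−k)`. -/
noncomputable def gvRadiusGrassmann (k : ℕ) (R : ℝ) (n : ℕ) : ℝ :=
  ((2 : ℝ) ^ (-(n : ℝ) * R) * grassmannVol k n / unitBallVol (2 * k * (n - k))) ^
    (1 / ((2 * k * (n - k) : ℕ) : ℝ))

open scoped Nat

noncomputable def grassmannVolRatio (k m : ℕ) : ℝ :=
  (k * m)! * ∏ i ∈ range k, (i ! : ℝ) / (m + i)!

lemma grassmannVol_add (k m : ℕ) :
    grassmannVol k (m + k) = π ^ (k * m) * ∏ i ∈ range k, (i ! : ℝ) / (m + i)! := by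
  rw [grassmannVol, Nat.add_sub_cancel, ← Ico_add_one_right_eq_Icc, ← Ico_add_one_right_eq_Icc,
    prod_Ico_eq_prod_range, prod_Ico_eq_prod_range, show m + k + 1 - (m + 1) = k by omega,
    Nat.add_sub_cancel, ← prod_div_distrib,
    show π ^ (k * m) = ∏ _i ∈ range k, π ^ m by
      rw [prod_const, card_range, ← pow_mul, mul_comm],
    ← prod_mul_distrib]
  refine prod_congr rfl fun i _ => ?_
  rw [show m + 1 + i - 1 = m + i by omega, show 1 + i - 1 = i by omega]
  field_simp
  ring

lemma unitBallVol_two_mul (j : ℕ) : unitBallVol (2 * j) = π ^ j / (j ! : ℝ) := by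
  rw [unitBallVol, show ((2 * j : ℕ) : ℝ) / 2 = j by push_cast; ring, Real.rpow_natCast,
    Real.Gamma_nat_eq_factorial]

lemma grassmannVol_div_unitBallVol (k m : ℕ) :
    grassmannVol k (m + k) / unitBallVol (2 * k * m) = grassmannVolRatio k m := by
  rw [grassmannVol_add, mul_assoc, unitBallVol_two_mul, grassmannVolRatio]
  field_simp

lemma grassmannVolRatio_zero (k : ℕ) : grassmannVolRatio k 0 = 1 := by
  simp [grassmannVolRatio, Nat.factorial_ne_zero]

lemma grassmannVolRatio_pos (k m : ℕ) : 0 < grassmannVolRatio k m := by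
  unfold grassmannVolRatio
  positivity

lemma grassmannVolRatio_succ (k m : ℕ) :
    grassmannVolRatio k (m + 1) =
      grassmannVolRatio k m * ∏ i ∈ range k, ((k * m + i + 1 : ℝ) / (m + i + 1)) := by
  have hfac : ((k * (m + 1))! : ℝ) = (k * m)! * ∏ i ∈ range k, (k * m + i + 1 : ℝ) := by
    rw [mul_add_one, ← Nat.factorial_mul_ascFactorial, Nat.ascFactorial_eq_prod_range]
    push_cast
    ring_nf
  have hstep : ∀ i, (i ! : ℝ) / (m + 1 + i)! = i ! / (m + i)! / (m + i + 1) := fun i => by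
    rw [show m + 1 + i = m + i + 1 by omega, Nat.factorial_succ]
    push_cast
    field_simp
  simp only [grassmannVolRatio, hfac, hstep, div_eq_mul_inv, prod_mul_distrib]
  ring

lemma one_le_grassmannVolRatio (k m : ℕ) : 1 ≤ grassmannVolRatio k m := by
  induction m with
  | zero => rw [grassmannVolRatio_zero]
  | succ m ih =>
    rw [grassmannVolRatio_succ]
    refine one_le_mul_of_one_le_of_one_le ih (one_le_prod fun i hi => ?_)
    have hmk : (m : ℝ) ≤ k * m := by
      exact_mod_cast Nat.le_mul_of_pos_left m (by have := mem_range.1 hi; omega)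
    rw [one_le_div (by positivity)]
    linarith

lemma tendsto_prod_range_mul_add_div_add (k : ℕ) :
    Tendsto (fun m : ℕ => ∏ i ∈ range k, ((k * m + i + 1 : ℝ) / (m + i + 1))) atTop
      (nhds ((k : ℝ) ^ k)) := by
  rw [show (k : ℝ) ^ k = ∏ _i ∈ range k, (k : ℝ) by simp]
  refine tendsto_finsetProd _ fun i _ => ?_
  have h := tendsto_add_mul_div_add_mul_atTop_nhds ((i : ℝ) + 1) (i + 1) (k : ℝ) one_ne_zero
  rw [div_one] at h
  refine h.congr fun m => ?_
  ring_nf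

lemma Filter.Tendsto.div_natCast_of_sub {u : ℕ → ℝ} {l : ℝ}
    (h : Tendsto (fun n => u (n + 1) - u n) atTop (nhds l)) :
    Tendsto (fun n : ℕ => u n / n) atTop (nhds l) := by
  have h' := h.cesaro.add (tendsto_const_div_atTop_nhds_zero_nat (u 0))
  rw [add_zero] at h'
  refine h'.congr fun n => ?_
  rw [sum_range_sub (fun n => u n)]
  ring

lemma tendsto_log_grassmannVolRatio_div (k : ℕ) :
    Tendsto (fun m : ℕ => Real.log (grassmannVolRatio k m) / m) atTop
      (nhds (k * Real.log k)) := by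
  have hk : (k : ℝ) ^ k ≠ 0 := by
    rcases k with _ | k
    · simp
    · positivity
  rw [← Real.log_pow]
  refine Tendsto.div_natCast_of_sub
    (((tendsto_prod_range_mul_add_div_add k).log hk).congr fun m => ?_)
  rw [← Real.log_div (grassmannVolRatio_pos k (m + 1)).ne' (grassmannVolRatio_pos k m).ne',
    grassmannVolRatio_succ, mul_div_cancel_left₀ _ (grassmannVolRatio_pos k m).ne']

lemma gvRadiusGrassmann_add (k : ℕ) (R : ℝ) (m : ℕ) :
    gvRadiusGrassmann k R (m + k) =
      ((2 : ℝ) ^ (-((m + k : ℕ) : ℝ) * R) * grassmannVolRatio k m) ^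
        (1 / ((2 * k * m : ℕ) : ℝ)) := by
  rw [gvRadiusGrassmann, Nat.add_sub_cancel, mul_div_assoc, grassmannVol_div_unitBallVol]

lemma half_rpow_le_gvRadiusGrassmann (k : ℕ) (R : ℝ) (m : ℕ) :
    ((1 : ℝ) / 2) ^ (((m + k : ℕ) : ℝ) * R / ((2 * k * m : ℕ) : ℝ)) ≤
      gvRadiusGrassmann k R (m + k) := by
  have hhalf : ((1 : ℝ) / 2) ^ (((m + k : ℕ) : ℝ) * R / ((2 * k * m : ℕ) : ℝ)) =
      ((2 : ℝ) ^ (-((m + k : ℕ) : ℝ) * R)) ^ (1 / ((2 * k * m : ℕ) : ℝ)) := by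
    rw [← Real.rpow_mul zero_le_two, one_div, Real.inv_rpow zero_le_two,
      ← Real.rpow_neg zero_le_two]
    ring_nf
  rw [hhalf, gvRadiusGrassmann_add]
  exact Real.rpow_le_rpow (by positivity)
    (le_mul_of_one_le_right (by positivity) (one_le_grassmannVolRatio k m)) (by positivity)

lemma natCast_mul_div_two_mul_sub_le_of_le {k m n : ℕ} {R : ℝ} (hR : 0 ≤ R) (hkm : k < m)
    (hmn : m ≤ n) :
    (n : ℝ) * R / ((2 * k * (n - k) : ℕ) : ℝ) ≤
      (m : ℝ) * R / ((2 * k * (m - k) : ℕ) : ℝ) := by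
  have hsplit : ∀ j : ℕ, k ≤ j →
      (j : ℝ) * R / ((2 * k * (j - k) : ℕ) : ℝ) = R / (2 * k) * (j / (j - k)) := by
    intro j hj
    rw [Nat.cast_mul, Nat.cast_mul, Nat.cast_sub hj, Nat.cast_ofNat, div_mul_div_comm, mul_comm R]
  rw [hsplit n (by omega), hsplit m hkm.le]
  gcongr R / (2 * k) * ?_
  have hkm' : (k : ℝ) < m := by exact_mod_cast hkm
  have hmn' : (m : ℝ) ≤ n := by exact_mod_cast hmn
  rw [div_le_div_iff₀ (by linarith) (by linarith)]
  nlinarith [(Nat.cast_nonneg k : (0 : ℝ) ≤ k)]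

lemma gvRadiusGrassmann_add_eq_exp {k m : ℕ} (hk : k ≠ 0) (hm : m ≠ 0) (R : ℝ) :
    gvRadiusGrassmann k R (m + k) =
      Real.exp (-(R * Real.log 2 / (2 * k)) * ((m + k) / m) +
        Real.log (grassmannVolRatio k m) / m / (2 * k)) := by
  have h2 : (0 : ℝ) < (2 : ℝ) ^ (-((m + k : ℕ) : ℝ) * R) := by positivity
  rw [gvRadiusGrassmann_add, Real.rpow_def_of_pos (mul_pos h2 (grassmannVolRatio_pos k m)),
    Real.log_mul h2.ne' (grassmannVolRatio_pos k m).ne', Real.log_rpow two_pos]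
  congr 1
  push_cast
  field_simp

lemma tendsto_gvRadiusGrassmann {k : ℕ} (hk : k ≠ 0) (R : ℝ) :
    Tendsto (gvRadiusGrassmann k R) atTop
      (nhds (Real.sqrt ((k : ℝ) * (2 : ℝ) ^ (-R / (k : ℝ))))) := by
  have hk' : (0 : ℝ) < k := by positivity
  have hlim : Real.sqrt ((k : ℝ) * (2 : ℝ) ^ (-R / (k : ℝ))) =
      Real.exp (-(R * Real.log 2 / (2 * k)) * 1 + k * Real.log k / (2 * k)) := by
    rw [Real.sqrt_eq_rpow, Real.rpow_def_of_pos (by positivity),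
      Real.log_mul hk'.ne' (by positivity), Real.log_rpow two_pos]
    congr 1
    field_simp
    ring
  have hshift : Tendsto (fun m : ℕ => ((m : ℝ) + k) / m) atTop (nhds 1) := by
    simpa [add_comm] using tendsto_add_mul_div_add_mul_atTop_nhds (k : ℝ) 0 1 one_ne_zero
  rw [hlim, ← tendsto_add_atTop_iff_nat k]
  refine (Real.continuous_exp.tendsto _).comp
    ((hshift.const_mul _).add ((tendsto_log_grassmannVolRatio_div k).div_const _)) |>.congr' ?_
  filter_upwards [eventually_ne_atTop 0] with m hm
  exact (gvRadiusGrassmann_add_eq_exp hk hm R).symm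

/-- **Gilbert–Varshamov lower bound for the Grassmann manifold.** For fixed `k ≥ 1` and
rate `R > 0`: (i) `r̲₀(n) ≥ (1/2)^{nR/D}` for all `n ≥ k+1`, the latter bound being
monotone increasing in `n`; (ii) `r̲₀(n) → √(k·2^{−R/k})` as `n → ∞`. -/
theorem gv_radius_grassmann_bound_and_limit (k : ℕ) (hk : 1 ≤ k) (R : ℝ) (hR : 0 < R) :
    (∀ n : ℕ, k + 1 ≤ n →
      ((1 : ℝ) / 2) ^ ((n : ℝ) * R / ((2 * k * (n - k) : ℕ) : ℝ)) ≤
        gvRadiusGrassmann k R n) ∧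
    (∀ m n : ℕ, k + 1 ≤ m → m ≤ n →
      ((1 : ℝ) / 2) ^ ((m : ℝ) * R / ((2 * k * (m - k) : ℕ) : ℝ)) ≤
        ((1 : ℝ) / 2) ^ ((n : ℝ) * R / ((2 * k * (n - k) : ℕ) : ℝ))) ∧
    Tendsto (gvRadiusGrassmann k R) atTop
      (nhds (Real.sqrt ((k : ℝ) * (2 : ℝ) ^ (-R / (k : ℝ))))) := by
  refine ⟨fun n hn => ?_, fun m n hm hmn => ?_, tendsto_gvRadiusGrassmann (by omega) R⟩
  · obtain ⟨m, rfl⟩ : ∃ m, n = m + k := ⟨n - k, by omega⟩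
    simpa only [Nat.add_sub_cancel] using half_rpow_le_gvRadiusGrassmann k R m
  · exact Real.rpow_le_rpow_of_exponent_ge (by norm_num) (by norm_num)
      (natCast_mul_div_two_mul_sub_le_of_le hR.le hm hmn)
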